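/- If p is a prime and x, y, z are positive integers solving 4/p = 1/x + 1/y + 1/z such that 4/p ≤ 1/(x-1) + 1/y (with x ≥ 2), then x = ⌊py/(4y-p)⌋ + 1. -/

import Mathlib

/-!
Put `r = 4/p - 1/y`, so that `p y / (4y - p) = r⁻¹`. The equation gives `r = 1/x + 1/z > 1/x`
and the hypothesis gives `r ≤ 1/(x - 1)`; inverting, `x - 1 ≤ r⁻¹ < x`.
-/

theorem Int.floor_inv_eq_of_inv_lt_of_le {K : Type*} [Field K] [LinearOrder K] [IsStrictOrderedRing K]
    [FloorRing K] {n : ℤ} {r : K} (hn : 0 < n) (hlt : ((n : K) + 1)⁻¹ < r) (hle : r ≤ (n : K)⁻¹) :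
    ⌊r⁻¹⌋ = n := by
  have hn' : (0 : K) < n := Int.cast_pos.mpr hn
  have hr : 0 < r := lt_trans (by positivity) hlt
  rw [Int.floor_eq_iff]
  have hn1 : (0 : K) < n + 1 := by positivity
  exact ⟨(le_inv_comm₀ hn' hr).mpr hle, (inv_lt_comm₀ hr hn1).mpr hlt⟩

theorem near_boundary_typeIb_general (p x y z : ℕ)
    (hx : 2 ≤ x) (hy : 0 < y) (hz : 0 < z)
    (heq : (4 : ℚ) / p = 1 / x + 1 / y + 1 / z)
    (hle : (4 : ℚ) / p ≤ 1 / ((x : ℚ) - 1) + 1 / y) :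
    (x : ℤ) = ⌊(p * y : ℚ) / (4 * y - p)⌋ + 1 := by
  have hp : (p : ℚ) ≠ 0 := by
    intro hp0
    have hpos : (0 : ℚ) < 1 / x + 1 / y + 1 / z := by positivity
    rw [← heq, hp0, div_zero] at hpos
    exact hpos.false
  have hy' : (y : ℚ) ≠ 0 := by positivity
  have hr : (p * y : ℚ) / (4 * y - p) = ((4 : ℚ) / p - 1 / y)⁻¹ := by
    rw [div_sub_div _ _ hp hy', inv_div]
    ring
  have hlt : (((x - 1 : ℤ) : ℚ) + 1)⁻¹ < 4 / p - 1 / y := by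
    have hz' : (0 : ℚ) < 1 / z := by positivity
    push_cast
    rw [sub_add_cancel]
    linarith [one_div (x : ℚ)]
  have hle' : 4 / p - 1 / y ≤ (((x - 1 : ℤ) : ℚ))⁻¹ := by
    push_cast
    linarith [one_div ((x : ℚ) - 1)]
  rw [hr, Int.floor_inv_eq_of_inv_lt_of_le (by omega) hlt hle']
  ring

theorem near_boundary_typeIb (p x y z : ℕ) (hp : p.Prime)
    (hx : 2 ≤ x) (hy : 0 < y) (hz : 0 < z)
    (heq : (4 : ℚ) / p = 1 / x + 1 / y + 1 / z)
    (hle : (4 : ℚ) / p ≤ 1 / ((x : ℚ) - 1) + 1 / y) :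
    (x : ℤ) = ⌊(p * y : ℚ) / (4 * y - p)⌋ + 1 :=
  near_boundary_typeIb_general p x y z hx hy hz heq hle
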